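/- arXiv:2602.04283 — 2 statements merged into one kernel-verified Lean document; each statement's English description precedes it below -/
import Mathlib

section
/- Let s ≥ 1 be an integer and let n ≥ 2s + 2. Then λ₁(D(K₁ ∨ (K_{n−2} ∪ K₁))) ≤ λ₁(D(K_s ∨ (K_{n−2s} ∪ sK₁))), with equality if and only if s = 1. -/
open Finset

/-- The distance matrix of a graph: the `(i,j)` entry is the graph distance. -/
noncomputable def distMatrix {V : Type*} [Fintype V] (G : SimpleGraph V) : Matrix V V ℝ :=
  fun i j => (G.dist i j : ℝ)

/-- The distance spectral radius: the largest eigenvalue of the distance matrix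
(for a connected graph the eigenvalue set is nonempty, and the distance matrix is
real symmetric, so its largest eigenvalue is the supremum of its real eigenvalues). -/
noncomputable def distSpecRad {V : Type*} [Fintype V] (G : SimpleGraph V) : ℝ := by
  classical
  exact sSup {μ : ℝ | Module.End.HasEigenvalue (Matrix.toLin' (distMatrix G)) μ}

/-- The join `G ∨ H` of two graphs: disjoint union together with all edges in between. -/
def graphJoin {α β : Type*} (G : SimpleGraph α) (H : SimpleGraph β) : SimpleGraph (α ⊕ β) where
  Adj x y :=
    match x, y with
    | Sum.inl a, Sum.inl b => G.Adj a b
    | Sum.inr a, Sum.inr b => H.Adj a b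
    | _, _ => True
  symm := by
    refine ⟨?_⟩
    rintro (a | a) (b | b) h
    · exact G.adj_symm h
    · trivial
    · trivial
    · exact H.adj_symm h
  loopless := by
    refine ⟨?_⟩
    rintro (a | a) h
    · exact G.irrefl h
    · exact H.irrefl h

/-- `S_{n,t} = K_t ∨ (n-t)K₁`. -/
def starLike (n t : ℕ) : SimpleGraph (Fin t ⊕ Fin (n - t)) :=
  graphJoin (⊤ : SimpleGraph (Fin t)) (⊥ : SimpleGraph (Fin (n - t)))

/-- The sum of the values of `f` over the edges incident with `v`. -/
noncomputable def incSum {V : Type*} [Fintype V] (G : SimpleGraph V) (f : Sym2 V → ℕ)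
    (v : V) : ℕ := by
  classical
  exact ∑ e ∈ Finset.univ.filter (fun e : Sym2 V => e ∈ G.incidenceSet v), f e

/-- A `k`-matching of `G`: a function on edges with values in `{0,…,k}` whose sum over
the edges incident with any vertex is at most `k`. -/
def IsKMatching {V : Type*} [Fintype V] (G : SimpleGraph V) (k : ℕ) (f : Sym2 V → ℕ) : Prop :=
  (∀ e, f e ≤ k) ∧ (∀ e, e ∉ G.edgeSet → f e = 0) ∧ (∀ v : V, incSum G f v ≤ k)

/-- A perfect `k`-matching: the sum over the edges incident with any vertex equals `k`. -/
def IsPerfectKMatching {V : Type*} [Fintype V] (G : SimpleGraph V) (k : ℕ)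
    (f : Sym2 V → ℕ) : Prop :=
  IsKMatching G k f ∧ ∀ v : V, incSum G f v = k

/-- `G` has a perfect `k`-matching. -/
def HasPerfectKMatching {V : Type*} [Fintype V] (G : SimpleGraph V) (k : ℕ) : Prop :=
  ∃ f : Sym2 V → ℕ, IsPerfectKMatching G k f

/-- `G` is `k`-`d`-critical. -/
def IsKDCritical {V : Type*} [Fintype V] (G : SimpleGraph V) (k d : ℕ) : Prop :=
  ∀ v : V, ∃ h : Sym2 V → ℕ, IsKMatching G k h ∧ incSum G h v = k - d ∧
    ∀ u : V, u ≠ v → incSum G h u = k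

/-- `i(G - S)`: the number of isolated vertices of `G - S`. -/
noncomputable def numIsolated {V : Type*} [Fintype V] (G : SimpleGraph V) (S : Set V) : ℕ :=
  Nat.card {v : ↥(Sᶜ) | ∀ u, ¬ (G.induce Sᶜ).Adj v u}

/-- `odd(G - S)`: the number of nontrivial odd connected components of `G - S`. -/
noncomputable def numOddNontrivial {V : Type*} [Fintype V] (G : SimpleGraph V) (S : Set V) : ℕ :=
  Nat.card {c : (G.induce Sᶜ).ConnectedComponent //
    Odd (Nat.card c.supp) ∧ 1 < Nat.card c.supp}

/-- `K₁ ∨ (K_{n-2} ∪ K₁)`. -/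
def Gstar (n : ℕ) : SimpleGraph (Fin 1 ⊕ (Fin (n - 2) ⊕ Fin 1)) :=
  graphJoin (⊤ : SimpleGraph (Fin 1))
    ((⊤ : SimpleGraph (Fin (n - 2))) ⊕g (⊥ : SimpleGraph (Fin 1)))

/-- `K₁ ∨ (K_{n-3} ∪ 2K₁)`. -/
def GstarPM (n : ℕ) : SimpleGraph (Fin 1 ⊕ (Fin (n - 3) ⊕ Fin 2)) :=
  graphJoin (⊤ : SimpleGraph (Fin 1))
    ((⊤ : SimpleGraph (Fin (n - 3))) ⊕g (⊥ : SimpleGraph (Fin 2)))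

/-- `K_s ∨ (K_{n-2s} ∪ sK₁)`. -/
def Gsn (n s : ℕ) : SimpleGraph (Fin s ⊕ (Fin (n - 2 * s) ⊕ Fin s)) :=
  graphJoin (⊤ : SimpleGraph (Fin s))
    ((⊤ : SimpleGraph (Fin (n - 2 * s))) ⊕g (⊥ : SimpleGraph (Fin s)))

/-- The "generalized factor-critical" condition for odd `k`:
`odd(G-S) + k·i(G-S) ≤ k|S| - 1` for every nonempty proper subset `S` of `V(G)`. -/
def IsGFCodd {V : Type*} [Fintype V] (G : SimpleGraph V) (k : ℕ) : Prop :=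
  ∀ S : Set V, S.Nonempty → S ≠ Set.univ →
    (numOddNontrivial G S : ℤ) + k * numIsolated G S ≤ k * S.ncard - 1

/-- The "generalized bicritical" condition for odd `k`:
`odd(G-S) + k·i(G-S) ≤ k|S| - 2` for every nonempty proper subset `S` of `V(G)`. -/
def IsGBCodd {V : Type*} [Fintype V] (G : SimpleGraph V) (k : ℕ) : Prop :=
  ∀ S : Set V, S.Nonempty → S ≠ Set.univ →
    (numOddNontrivial G S : ℤ) + k * numIsolated G S ≤ k * S.ncard - 2

/-- The "generalized factor-critical / bicritical" condition for even `k`: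
`i(G-S) ≤ |S| - 1` for every nonempty proper subset `S` of `V(G)`. -/
def IsGFCBCeven {V : Type*} [Fintype V] (G : SimpleGraph V) : Prop :=
  ∀ S : Set V, S.Nonempty → S ≠ Set.univ →
    (numIsolated G S : ℤ) ≤ S.ncard - 1

/-- The Wiener index of a graph on `Fin n`: the sum of distances over pairs `i < j`. -/
noncomputable def wienerFin {n : ℕ} (G : SimpleGraph (Fin n)) : ℕ :=
  ∑ p ∈ Finset.univ.filter (fun p : Fin n × Fin n => p.1 < p.2), G.dist p.1 p.2


open Matrix

lemma specRad_key {V : Type*} [Fintype V] [Nonempty V] (M : Matrix V V ℝ)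
    (T : Module.End ℝ (V → ℝ)) (hT : ∀ v, T v = M.mulVec v)
    (hsym : Mᵀ = M) (hpos : ∀ i j, 0 ≤ M i j) (x : V → ℝ) (hx : ∀ i, 0 < x i)
    (μ : ℝ) (hμ : 0 < μ) (heig : M.mulVec x = μ • x) :
    sSup {ν : ℝ | Module.End.HasEigenvalue T ν} = μ := by
  set E := {ν : ℝ | Module.End.HasEigenvalue T ν} with hE
  have hx0 : x ≠ 0 := by
    intro h
    exact absurd (congrFun h (Classical.arbitrary V)) (ne_of_gt (hx _))
  have hμE : μ ∈ E := by
    refine Module.End.hasEigenvalue_of_hasEigenvector ⟨?_, hx0⟩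
    rw [Module.End.mem_eigenspace_iff, hT, heig]
  have hfin : E.Finite := by
    have h1 : E ⊆ {r : ℝ | (minpoly ℝ T).IsRoot r} := by
      intro ν hν
      exact Module.End.hasEigenvalue_iff_isRoot.1 hν
    exact (Polynomial.finite_setOf_isRoot (minpoly.ne_zero
      (Algebra.IsIntegral.isIntegral T))).subset h1
  have hbdd : BddAbove E := hfin.bddAbove
  have hne : E.Nonempty := ⟨μ, hμE⟩
  have hlam_mem : sSup E ∈ E := hne.csSup_mem hfin
  set lam := sSup E with hlam
  have hle : μ ≤ lam := le_csSup hbdd hμE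
  obtain ⟨y, hy⟩ := Module.End.HasEigenvalue.exists_hasEigenvector hlam_mem
  have hyy : M.mulVec y = lam • y := by
    rw [← hT]
    exact hy.apply_eq_smul
  set z : V → ℝ := fun i => |y i| with hz
  have hlam0 : 0 ≤ lam := le_trans hμ.le hle
  have hkey : ∀ i, lam * z i ≤ (M.mulVec z) i := by
    intro i
    have h1 : lam * z i = |lam * y i| := by rw [abs_mul, abs_of_nonneg hlam0]
    have h2 : lam * y i = (M.mulVec y) i := by rw [hyy]; simp
    rw [h1, h2]
    have h3 : (M.mulVec y) i = ∑ j, M i j * y j := by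
      simp [Matrix.mulVec, dotProduct]
    have h4 : (M.mulVec z) i = ∑ j, M i j * |y j| := by
      simp [Matrix.mulVec, dotProduct, hz]
    rw [h3, h4]
    refine le_trans (Finset.abs_sum_le_sum_abs _ _) ?_
    refine Finset.sum_le_sum fun j _ => ?_
    rw [abs_mul, abs_of_nonneg (hpos i j)]
  have e1 : x ⬝ᵥ (M.mulVec z) = μ * (x ⬝ᵥ z) := by
    rw [Matrix.dotProduct_mulVec, ← Matrix.mulVec_transpose, hsym, heig]
    simp [dotProduct, Finset.mul_sum, mul_assoc]
  have e2 : lam * (x ⬝ᵥ z) ≤ x ⬝ᵥ (M.mulVec z) := by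
    have hterm : ∀ i, x i * (lam * z i) ≤ x i * (M.mulVec z) i := fun i =>
      mul_le_mul_of_nonneg_left (hkey i) (hx i).le
    calc lam * (x ⬝ᵥ z) = ∑ i, x i * (lam * z i) := by
          simp only [dotProduct, Finset.mul_sum]
          exact Finset.sum_congr rfl fun i _ => by ring
      _ ≤ ∑ i, x i * (M.mulVec z) i := Finset.sum_le_sum fun i _ => hterm i
      _ = x ⬝ᵥ (M.mulVec z) := by simp [dotProduct]
  have hxz_pos : 0 < x ⬝ᵥ z := by
    obtain ⟨j, hj⟩ := Function.ne_iff.1 hy.2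
    have hj' : 0 < z j := abs_pos.2 hj
    refine Finset.sum_pos' (fun i _ => mul_nonneg (hx i).le (abs_nonneg _))
      ⟨j, Finset.mem_univ j, mul_pos (hx j) hj'⟩
  have hge : lam ≤ μ := le_of_mul_le_mul_right (e2.trans_eq e1) hxz_pos
  exact le_antisymm hge hle

def genG (a b c : ℕ) : SimpleGraph (Fin a ⊕ (Fin b ⊕ Fin c)) :=
  graphJoin (⊤ : SimpleGraph (Fin a))
    ((⊤ : SimpleGraph (Fin b)) ⊕g (⊥ : SimpleGraph (Fin c)))

lemma genG_adj (a b c : ℕ) (i j : Fin a ⊕ (Fin b ⊕ Fin c)) :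
    (genG a b c).Adj i j ↔ (match i, j with
      | Sum.inl x, Sum.inl y => x ≠ y
      | Sum.inr (Sum.inl x), Sum.inr (Sum.inl y) => x ≠ y
      | Sum.inr (Sum.inl _), Sum.inr (Sum.inr _) => False
      | Sum.inr (Sum.inr _), Sum.inr (Sum.inl _) => False
      | Sum.inr (Sum.inr _), Sum.inr (Sum.inr _) => False
      | _, _ => True) := by
  rcases i with x | (x | x) <;> rcases j with y | (y | y) <;>
    simp [genG, graphJoin, SimpleGraph.sum_adj]

lemma dist_eq_two' {V : Type*} {G : SimpleGraph V} {u v w : V}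
    (hne : u ≠ v) (hna : ¬ G.Adj u v) (h1 : G.Adj u w) (h2 : G.Adj w v) :
    G.dist u v = 2 := by
  have hle : G.dist u v ≤ 2 := by
    have := SimpleGraph.dist_le
      (SimpleGraph.Walk.cons h1 (SimpleGraph.Walk.cons h2 SimpleGraph.Walk.nil))
    simpa using this
  have hreach : G.Reachable u v :=
    ⟨SimpleGraph.Walk.cons h1 (SimpleGraph.Walk.cons h2 SimpleGraph.Walk.nil)⟩
  have h0 : 0 < G.dist u v := hreach.pos_dist_of_ne hne
  have h1' : G.dist u v ≠ 1 := fun h => hna (SimpleGraph.dist_eq_one_iff_adj.1 h)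
  omega

open scoped Classical in
lemma genG_dist (a b c : ℕ) (ha : 0 < a) (i j : Fin a ⊕ (Fin b ⊕ Fin c)) :
    (genG a b c).dist i j = if i = j then 0 else if (genG a b c).Adj i j then 1 else 2 := by
  by_cases hij : i = j
  · simp [hij]
  · by_cases hadj : (genG a b c).Adj i j
    · rw [if_neg hij, if_pos hadj]
      exact SimpleGraph.dist_eq_one_iff_adj.2 hadj
    · rw [if_neg hij, if_neg hadj]
      set w : Fin a ⊕ (Fin b ⊕ Fin c) := Sum.inl ⟨0, ha⟩ with hw
      rcases i with x | x
      · rcases j with y | y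
        · exact absurd ((genG_adj a b c _ _).2 (by simpa using fun h => hij (by rw [h]))) hadj
        · exact absurd ((genG_adj a b c _ _).2 (by rcases y with y | y <;> trivial)) hadj
      · rcases j with y | y
        · exact absurd ((genG_adj a b c _ _).2 (by rcases x with x | x <;> trivial)) hadj
        · refine dist_eq_two' hij hadj (w := w) ?_ ?_
          · exact (genG_adj a b c _ _).2 (by rcases x with x | x <;> trivial)
          · exact (genG_adj a b c _ _).2 (by rcases y with y | y <;> trivial)

lemma distMatrix_genG (a b c : ℕ) (ha : 0 < a) (i j : Fin a ⊕ (Fin b ⊕ Fin c)) :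
    distMatrix (genG a b c) i j =
    (match i, j with
      | Sum.inl x, Sum.inl y => if x = y then 0 else 1
      | Sum.inl _, Sum.inr _ => 1
      | Sum.inr _, Sum.inl _ => 1
      | Sum.inr (Sum.inl x), Sum.inr (Sum.inl y) => if x = y then 0 else 1
      | Sum.inr (Sum.inl _), Sum.inr (Sum.inr _) => 2
      | Sum.inr (Sum.inr _), Sum.inr (Sum.inl _) => 2
      | Sum.inr (Sum.inr x), Sum.inr (Sum.inr y) => (if x = y then 0 else 2 : ℝ)) := by
  have h := genG_dist a b c ha i j
  rcases i with x | (x | x) <;> rcases j with y | (y | y) <;> simp only [distMatrix, h]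
  · by_cases hxy : x = y
    · simp [hxy]
    · have hadj : (genG a b c).Adj (Sum.inl x) (Sum.inl y) := (genG_adj a b c _ _).2 hxy
      have hne : (Sum.inl x : Fin a ⊕ (Fin b ⊕ Fin c)) ≠ Sum.inl y := by simpa using hxy
      rw [if_neg hne, if_pos hadj, if_neg hxy]
      norm_num
  · have hadj : (genG a b c).Adj (Sum.inl x) (Sum.inr (Sum.inl y)) :=
      (genG_adj a b c _ _).2 trivial
    rw [if_neg (by simp), if_pos hadj]; norm_num
  · have hadj : (genG a b c).Adj (Sum.inl x) (Sum.inr (Sum.inr y)) :=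
      (genG_adj a b c _ _).2 trivial
    rw [if_neg (by simp), if_pos hadj]; norm_num
  · have hadj : (genG a b c).Adj (Sum.inr (Sum.inl x)) (Sum.inl y) :=
      (genG_adj a b c _ _).2 trivial
    rw [if_neg (by simp), if_pos hadj]; norm_num
  · by_cases hxy : x = y
    · simp [hxy]
    · have hadj : (genG a b c).Adj (Sum.inr (Sum.inl x)) (Sum.inr (Sum.inl y)) :=
        (genG_adj a b c _ _).2 hxy
      have hne : (Sum.inr (Sum.inl x) : Fin a ⊕ (Fin b ⊕ Fin c)) ≠ Sum.inr (Sum.inl y) := by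
        simpa using hxy
      rw [if_neg hne, if_pos hadj, if_neg hxy]
      norm_num
  · have hna : ¬ (genG a b c).Adj (Sum.inr (Sum.inl x)) (Sum.inr (Sum.inr y)) :=
      fun hh => (genG_adj a b c _ _).1 hh
    rw [if_neg (by simp), if_neg hna]; norm_num
  · have hadj : (genG a b c).Adj (Sum.inr (Sum.inr x)) (Sum.inl y) :=
      (genG_adj a b c _ _).2 trivial
    rw [if_neg (by simp), if_pos hadj]; norm_num
  · have hna : ¬ (genG a b c).Adj (Sum.inr (Sum.inr x)) (Sum.inr (Sum.inl y)) :=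
      fun hh => (genG_adj a b c _ _).1 hh
    rw [if_neg (by simp), if_neg hna]; norm_num
  · by_cases hxy : x = y
    · simp [hxy]
    · have hna : ¬ (genG a b c).Adj (Sum.inr (Sum.inr x)) (Sum.inr (Sum.inr y)) :=
        fun hh => (genG_adj a b c _ _).1 hh
      have hne : (Sum.inr (Sum.inr x) : Fin a ⊕ (Fin b ⊕ Fin c)) ≠ Sum.inr (Sum.inr y) := by
        simpa using hxy
      rw [if_neg hne, if_neg hna, if_neg hxy]
      norm_num

lemma sum_offdiag {α : Type*} [Fintype α] [DecidableEq α] (x₀ : α) (v : ℝ) :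
    ∑ y : α, (if x₀ = y then 0 else v) = (Fintype.card α : ℝ) * v - v := by
  have h : ∀ y : α, (if x₀ = y then (0:ℝ) else v) = v - (if x₀ = y then v else 0) := by
    intro y; split_ifs <;> ring
  simp only [h, Finset.sum_sub_distrib, Finset.sum_const, Finset.card_univ, Finset.sum_ite_eq]
  simp [nsmul_eq_mul]

lemma distSpecRad_genG (a b c : ℕ) (ha : 0 < a) (p q r μ : ℝ)
    (hp : 0 < p) (hq : 0 < q) (hr : 0 < r) (hμ : 0 < μ)
    (e1 : ((a:ℝ)-1)*p + (b:ℝ)*q + (c:ℝ)*r = μ*p)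
    (e2 : (a:ℝ)*p + ((b:ℝ)-1)*q + 2*(c:ℝ)*r = μ*q)
    (e3 : (a:ℝ)*p + 2*(b:ℝ)*q + 2*((c:ℝ)-1)*r = μ*r) :
    distSpecRad (genG a b c) = μ := by
  have hne : Nonempty (Fin a ⊕ (Fin b ⊕ Fin c)) := ⟨Sum.inl ⟨0, ha⟩⟩
  set xv : (Fin a ⊕ (Fin b ⊕ Fin c)) → ℝ :=
    Sum.elim (fun _ => p) (Sum.elim (fun _ => q) (fun _ => r)) with hxv
  have heig : (distMatrix (genG a b c)).mulVec xv = μ • xv := by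
    funext i
    have hrow : (distMatrix (genG a b c)).mulVec xv i
        = ∑ j, distMatrix (genG a b c) i j * xv j := rfl
    rcases i with x | (x | x)
    · have hS : ∑ j, distMatrix (genG a b c) (Sum.inl x) j * xv j
          = (∑ y : Fin a, (if x = y then 0 else 1) * p)
            + ((∑ _y : Fin b, 1 * q) + (∑ _y : Fin c, 1 * r)) := by
        rw [Fintype.sum_sum_type]
        congr 1
        · exact Finset.sum_congr rfl fun y _ => by rw [distMatrix_genG a b c ha]; rfl
        · rw [Fintype.sum_sum_type]
          congr 1
          · exact Finset.sum_congr rfl fun y _ => by rw [distMatrix_genG a b c ha]; rfl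
          · exact Finset.sum_congr rfl fun y _ => by rw [distMatrix_genG a b c ha]; rfl
      have h2 : ∑ y : Fin a, (if x = y then (0:ℝ) else 1) * p = (a:ℝ)*p - p := by
        have : ∀ y : Fin a, (if x = y then (0:ℝ) else 1) * p = if x = y then 0 else p := by
          intro y; split_ifs <;> ring
        rw [Finset.sum_congr rfl fun y _ => this y, sum_offdiag]
        simp
      rw [hrow, hS, h2]
      simp only [one_mul, Finset.sum_const, Finset.card_univ, Fintype.card_fin, nsmul_eq_mul]
      show (a:ℝ)*p - p + ((b:ℝ)*q + (c:ℝ)*r) = μ * p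
      linarith [e1]
    · have hS : ∑ j, distMatrix (genG a b c) (Sum.inr (Sum.inl x)) j * xv j
          = (∑ _y : Fin a, 1 * p)
            + ((∑ y : Fin b, (if x = y then 0 else 1) * q) + (∑ _y : Fin c, 2 * r)) := by
        rw [Fintype.sum_sum_type]
        congr 1
        · exact Finset.sum_congr rfl fun y _ => by rw [distMatrix_genG a b c ha]; rfl
        · rw [Fintype.sum_sum_type]
          congr 1
          · exact Finset.sum_congr rfl fun y _ => by rw [distMatrix_genG a b c ha]; rfl
          · exact Finset.sum_congr rfl fun y _ => by rw [distMatrix_genG a b c ha]; rfl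
      have h2 : ∑ y : Fin b, (if x = y then (0:ℝ) else 1) * q = (b:ℝ)*q - q := by
        have : ∀ y : Fin b, (if x = y then (0:ℝ) else 1) * q = if x = y then 0 else q := by
          intro y; split_ifs <;> ring
        rw [Finset.sum_congr rfl fun y _ => this y, sum_offdiag]
        simp
      rw [hrow, hS, h2]
      simp only [one_mul, Finset.sum_const, Finset.card_univ, Fintype.card_fin, nsmul_eq_mul]
      show (a:ℝ)*p + ((b:ℝ)*q - q + (c:ℝ)*(2*r)) = μ * q
      linarith [e2]
    · have hS : ∑ j, distMatrix (genG a b c) (Sum.inr (Sum.inr x)) j * xv j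
          = (∑ _y : Fin a, 1 * p)
            + ((∑ _y : Fin b, 2 * q) + (∑ y : Fin c, (if x = y then 0 else 2) * r)) := by
        rw [Fintype.sum_sum_type]
        congr 1
        · exact Finset.sum_congr rfl fun y _ => by rw [distMatrix_genG a b c ha]; rfl
        · rw [Fintype.sum_sum_type]
          congr 1
          · exact Finset.sum_congr rfl fun y _ => by rw [distMatrix_genG a b c ha]; rfl
          · exact Finset.sum_congr rfl fun y _ => by rw [distMatrix_genG a b c ha]; rfl
      have h2 : ∑ y : Fin c, (if x = y then (0:ℝ) else 2) * r = (c:ℝ)*(2*r) - 2*r := by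
        have : ∀ y : Fin c, (if x = y then (0:ℝ) else 2) * r = if x = y then 0 else 2*r := by
          intro y; split_ifs <;> ring
        rw [Finset.sum_congr rfl fun y _ => this y, sum_offdiag, Fintype.card_fin]
      rw [hrow, hS, h2]
      simp only [one_mul, Finset.sum_const, Finset.card_univ, Fintype.card_fin, nsmul_eq_mul]
      show (a:ℝ)*p + ((b:ℝ)*(2*q) + ((c:ℝ)*(2*r) - 2*r)) = μ * r
      linarith [e3]
  have hsym : (distMatrix (genG a b c))ᵀ = distMatrix (genG a b c) := by
    ext i j
    simp [Matrix.transpose_apply, distMatrix, SimpleGraph.dist_comm]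
  have hpos : ∀ i j, 0 ≤ distMatrix (genG a b c) i j := fun i j => Nat.cast_nonneg _
  have hx : ∀ i, 0 < xv i := by rintro (x | (x | x)) <;> simpa [hxv]
  unfold distSpecRad
  exact specRad_key _ _ (fun v => rfl) hsym hpos xv hx μ hμ heig

lemma alg1 (S M t : ℝ) (hS : 2 ≤ S) (hM : 2 ≤ M) (ht : 2*S + M - 1 ≤ t)
    (hroot : (t - (2*S+M) + 3)*(t^2-1) - ((2*S+M)-2)*(5*t+4) = 0) :
    (t-S+1)*((t-M+1)*(t+2) - 2*S*(t+M+1)) - M*S*(t+2) - S*S*(t+M+1) < 0 := by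
  have hfac : (t-S+1)*((t-M+1)*(t+2) - 2*S*(t+M+1)) - M*S*(t+2) - S*S*(t+M+1)
      = ((t - (2*S+M) + 3)*(t^2-1) - ((2*S+M)-2)*(5*t+4))
        + (S-1)*(-t^2+(S-2*M+4)*t+S*M+S-M+3) := by ring
  rw [hfac, hroot, zero_add]
  have hg : -t^2+(S-2*M+4)*t+S*M+S-M+3 < 0 := by
    nlinarith [mul_nonneg (by linarith : (0:ℝ) ≤ t-(2*S+M-1)) (by linarith : (0:ℝ) ≤ t+S+3*M-5),
      mul_nonneg (by linarith : (0:ℝ) ≤ S-2) (by linarith : (0:ℝ) ≤ M-2),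
      mul_nonneg (by linarith : (0:ℝ) ≤ M-2) (by linarith : (0:ℝ) ≤ 3*M-1),
      mul_nonneg (by linarith : (0:ℝ) ≤ S-2) (by linarith : (0:ℝ) ≤ S)]
  have h1 : 0 < S - 1 := by linarith
  nlinarith [mul_pos h1 (neg_pos.2 hg)]

lemma alg2 (S M : ℝ) (hS : 2 ≤ S) (hM : 2 ≤ M) :
    0 < (2*(2*S+M)-S+1)*((2*(2*S+M)-M+1)*(2*(2*S+M)+2) - 2*S*(2*(2*S+M)+M+1))
      - M*S*(2*(2*S+M)+2) - S*S*(2*(2*S+M)+M+1) := by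
  have hS0 : (0:ℝ) < S := by linarith
  have hM0 : (0:ℝ) < M := by linarith
  nlinarith [mul_pos (mul_pos hS0 hS0) hS0, mul_pos (mul_pos hS0 hS0) hM0,
    mul_pos (mul_pos hS0 hM0) hM0, mul_pos (mul_pos hM0 hM0) hM0,
    mul_pos hS0 hS0, mul_pos hS0 hM0, mul_pos hM0 hM0]

lemma exists_root1 (n : ℕ) (hn : 6 ≤ n) :
    ∃ t : ℝ, (n:ℝ) - 1 ≤ t ∧ t ≤ 2*(n:ℝ) - 3 ∧
      (t - (n:ℝ) + 3)*(t^2 - 1) - ((n:ℝ)-2)*(5*t+4) = 0 := by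
  set N : ℝ := (n:ℝ) with hN
  have hN6 : (6:ℝ) ≤ N := by rw [hN]; exact_mod_cast hn
  set f : ℝ → ℝ := fun t => (t - N + 3)*(t^2 - 1) - (N-2)*(5*t+4) with hf
  have hc : ContinuousOn f (Set.Icc (N-1) (2*N-3)) := by fun_prop
  have hab : N - 1 ≤ 2*N - 3 := by linarith
  have h0 : f (N-1) ≤ 0 := by
    show (N-1 - N + 3)*((N-1)^2 - 1) - (N-2)*(5*(N-1)+4) ≤ 0
    nlinarith
  have h1 : (0:ℝ) ≤ f (2*N-3) := by
    show (0:ℝ) ≤ (2*N-3 - N + 3)*((2*N-3)^2 - 1) - (N-2)*(5*(2*N-3)+4)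
    nlinarith
  obtain ⟨t, ht, hft⟩ := intermediate_value_Icc hab hc ⟨h0, h1⟩
  exact ⟨t, ht.1, ht.2, hft⟩

theorem statement10 (s n : ℕ) (hs : 1 ≤ s) (hn : 2 * s + 2 ≤ n) :
    distSpecRad (Gstar n) ≤ distSpecRad (Gsn n s) ∧
      (distSpecRad (Gstar n) = distSpecRad (Gsn n s) ↔ s = 1) := by
  rcases eq_or_lt_of_le hs with hs1 | hs2
  · -- s = 1
    have heq : distSpecRad (Gstar n) = distSpecRad (Gsn n s) := by
      subst hs1; rfl
    exact ⟨heq.le, ⟨fun _ => hs1.symm, fun _ => heq⟩⟩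
  · -- 2 ≤ s
    have hs2' : 2 ≤ s := hs2
    have hn6 : 6 ≤ n := by omega
    have hcastN2 : ((n-2:ℕ):ℝ) = (n:ℝ) - 2 := by
      rw [Nat.cast_sub (by omega : 2 ≤ n)]; norm_num
    have hcastM : ((n-2*s:ℕ):ℝ) = (n:ℝ) - 2*(s:ℝ) := by
      rw [Nat.cast_sub (by omega : 2*s ≤ n)]; push_cast; ring
    have hSR : (2:ℝ) ≤ (s:ℝ) := by exact_mod_cast hs2'
    have hMR : (2:ℝ) ≤ (n:ℝ) - 2*(s:ℝ) := by
      rw [← hcastM]; exact_mod_cast (by omega : 2 ≤ n - 2*s)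
    have hNR : (6:ℝ) ≤ (n:ℝ) := by exact_mod_cast hn6
    obtain ⟨t1, ht1a, ht1b, hroot1⟩ := exists_root1 n hn6
    have ht1five : (5:ℝ) ≤ t1 := by linarith
    -- Gstar spectral radius
    have hA : distSpecRad (genG 1 (n-2) 1) = t1 := by
      refine distSpecRad_genG 1 (n-2) 1 one_pos
        (((n:ℝ)-2)*(t1+2)) (t1^2-1) (((n:ℝ)-2)*(2*t1+1)) t1
        (by nlinarith) (by nlinarith) (by nlinarith) (by linarith) ?_ ?_ ?_
      · rw [hcastN2]; push_cast; ring
      · rw [hcastN2]; push_cast; linear_combination (-1 : ℝ) * hroot1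
      · rw [hcastN2]; push_cast; ring
    have hGstar : distSpecRad (Gstar n) = t1 := hA
    -- second root
    set f2 : ℝ → ℝ := fun t =>
      (t-(s:ℝ)+1)*((t-((n:ℝ)-2*(s:ℝ))+1)*(t+2) - 2*(s:ℝ)*(t+((n:ℝ)-2*(s:ℝ))+1))
        - ((n:ℝ)-2*(s:ℝ))*(s:ℝ)*(t+2) - (s:ℝ)*(s:ℝ)*(t+((n:ℝ)-2*(s:ℝ))+1) with hf2
    have hneg : f2 t1 < 0 := by
      have h := alg1 (s:ℝ) ((n:ℝ)-2*(s:ℝ)) t1 hSR hMR (by linarith)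
        (by linear_combination hroot1)
      simpa [hf2] using h
    have hpos2 : (0:ℝ) < f2 (2*(n:ℝ)) := by
      have h := alg2 (s:ℝ) ((n:ℝ)-2*(s:ℝ)) hSR hMR
      have heq : f2 (2*(n:ℝ))
          = (2*(2*(s:ℝ)+((n:ℝ)-2*(s:ℝ)))-(s:ℝ)+1)*((2*(2*(s:ℝ)+((n:ℝ)-2*(s:ℝ)))-((n:ℝ)-2*(s:ℝ))+1)*(2*(2*(s:ℝ)+((n:ℝ)-2*(s:ℝ)))+2) - 2*(s:ℝ)*(2*(2*(s:ℝ)+((n:ℝ)-2*(s:ℝ)))+((n:ℝ)-2*(s:ℝ))+1))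
            - ((n:ℝ)-2*(s:ℝ))*(s:ℝ)*(2*(2*(s:ℝ)+((n:ℝ)-2*(s:ℝ)))+2)
            - (s:ℝ)*(s:ℝ)*(2*(2*(s:ℝ)+((n:ℝ)-2*(s:ℝ)))+((n:ℝ)-2*(s:ℝ))+1) := by
        simp only [hf2]; ring
      rw [heq]; exact h
    have hc2 : ContinuousOn f2 (Set.Icc t1 (2*(n:ℝ))) := by fun_prop
    have hab2 : t1 ≤ 2*(n:ℝ) := by linarith
    obtain ⟨t2, ht2, hroot2⟩ := intermediate_value_Icc hab2 hc2 ⟨hneg.le, hpos2.le⟩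
    have hlt : t1 < t2 := by
      rcases lt_or_eq_of_le ht2.1 with h | h
      · exact h
      · exact absurd (h ▸ hroot2) hneg.ne
    have hroot2' : (t2-(s:ℝ)+1)*((t2-((n:ℝ)-2*(s:ℝ))+1)*(t2+2)
          - 2*(s:ℝ)*(t2+((n:ℝ)-2*(s:ℝ))+1))
        - ((n:ℝ)-2*(s:ℝ))*(s:ℝ)*(t2+2) - (s:ℝ)*(s:ℝ)*(t2+((n:ℝ)-2*(s:ℝ))+1) = 0 := by
      simpa [hf2] using hroot2
    have ht2big : (s:ℝ) + 3 ≤ t2 := by linarith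
    -- components for Gsn
    have hq2 : 0 < (s:ℝ)*(t2+2) :=
      mul_pos (by linarith : (0:ℝ) < (s:ℝ)) (by linarith : (0:ℝ) < t2+2)
    have hr2 : 0 < (s:ℝ)*(t2+((n:ℝ)-2*(s:ℝ))+1) :=
      mul_pos (by linarith : (0:ℝ) < (s:ℝ)) (by linarith : (0:ℝ) < t2+((n:ℝ)-2*(s:ℝ))+1)
    have hp2 : 0 < (t2-((n:ℝ)-2*(s:ℝ))+1)*(t2+2) - 2*(s:ℝ)*(t2+((n:ℝ)-2*(s:ℝ))+1) := by
      by_contra hp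
      push_neg at hp
      have h5 : (0:ℝ) < t2 - (s:ℝ) + 1 := by linarith
      have h6 := mul_nonpos_of_nonneg_of_nonpos h5.le hp
      have hMq : 0 < ((n:ℝ)-2*(s:ℝ))*((s:ℝ)*(t2+2)) :=
        mul_pos (by linarith : (0:ℝ) < (n:ℝ)-2*(s:ℝ)) hq2
      have hsr : 0 < (s:ℝ)*((s:ℝ)*(t2+((n:ℝ)-2*(s:ℝ))+1)) :=
        mul_pos (by linarith : (0:ℝ) < (s:ℝ)) hr2
      nlinarith [h6, hroot2', hMq, hsr]
    have hB : distSpecRad (genG s (n-2*s) s) = t2 := by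
      refine distSpecRad_genG s (n-2*s) s (by omega)
        ((t2-((n:ℝ)-2*(s:ℝ))+1)*(t2+2) - 2*(s:ℝ)*(t2+((n:ℝ)-2*(s:ℝ))+1))
        ((s:ℝ)*(t2+2)) ((s:ℝ)*(t2+((n:ℝ)-2*(s:ℝ))+1)) t2
        hp2 hq2 hr2 (by linarith) ?_ ?_ ?_
      · rw [hcastM]
        linear_combination (-1 : ℝ) * hroot2'
      · rw [hcastM]
        ring
      · rw [hcastM]
        ring
    have hGsn : distSpecRad (Gsn n s) = t2 := hB
    refine ⟨by rw [hGstar, hGsn]; linarith, ⟨fun h => ?_, fun h => ?_⟩⟩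
    · rw [hGstar, hGsn] at h
      exact absurd h (ne_of_lt hlt)
    · omega
end

section
/- For every even integer n ≥ 2, the distance spectral radius of the graph S_{n,n/2} equals (√(5n² − 4n + 4) + 3n − 6)/4. -/
open Finset

section AuxStatement15

open Sum Module.End

private lemma auxMain (t t' : ℕ) (ht : 1 ≤ t) (htt : t' = t) :
    distSpecRad (graphJoin (⊤ : SimpleGraph (Fin t)) (⊥ : SimpleGraph (Fin t'))) =
      (Real.sqrt (5 * (t : ℝ) ^ 2 - 2 * t + 1) + 3 * t - 3) / 2 := by
  subst t'
  classical
  set G := graphJoin (⊤ : SimpleGraph (Fin t)) (⊥ : SimpleGraph (Fin t)) with hG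
  set lam : ℝ := (Real.sqrt (5 * (t : ℝ) ^ 2 - 2 * t + 1) + 3 * t - 3) / 2 with hlam
  have ht1 : (1 : ℝ) ≤ (t : ℝ) := by exact_mod_cast ht
  have ht0 : (t : ℝ) ≠ 0 := by positivity
  have hdisc : (0 : ℝ) ≤ 5 * (t : ℝ) ^ 2 - 2 * t + 1 := by nlinarith [sq_nonneg ((t:ℝ) - 1)]
  have hsqnn : 0 ≤ Real.sqrt (5 * (t : ℝ) ^ 2 - 2 * t + 1) := Real.sqrt_nonneg _
  have hsq : Real.sqrt (5 * (t : ℝ) ^ 2 - 2 * t + 1) ^ 2 = 5 * (t : ℝ) ^ 2 - 2 * t + 1 :=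
    Real.sq_sqrt hdisc
  have hlamnn : 0 ≤ lam := by rw [hlam]; nlinarith
  have hquad : lam ^ 2 - (3 * (t : ℝ) - 3) * lam + ((t : ℝ) ^ 2 - 4 * t + 2) = 0 := by
    rw [hlam]; linear_combination hsq / 4
  have x0 : Fin t := ⟨0, ht⟩
  -- distances
  have hd_ll : ∀ i j : Fin t, G.dist (inl i) (inl j) = if i = j then 0 else 1 := by
    intro i j
    by_cases h : i = j
    · simp [h, SimpleGraph.dist_self]
    · rw [if_neg h]
      exact SimpleGraph.dist_eq_one_iff_adj.mpr h
  have hd_lr : ∀ (i : Fin t) (j : Fin t), G.dist (inl i) (inr j) = 1 := by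
    intro i j; exact SimpleGraph.dist_eq_one_iff_adj.mpr trivial
  have hd_rl : ∀ (i : Fin t) (j : Fin t), G.dist (inr i) (inl j) = 1 := by
    intro i j; exact SimpleGraph.dist_eq_one_iff_adj.mpr trivial
  have hd_rr : ∀ i j : Fin t, G.dist (inr i) (inr j) = if i = j then 0 else 2 := by
    intro i j
    by_cases h : i = j
    · simp [h, SimpleGraph.dist_self]
    · rw [if_neg h]
      have hadj1 : G.Adj (inr i) (inl x0) := trivial
      have hadj2 : G.Adj (inl x0) (inr j) := trivial
      let w : G.Walk (inr i) (inr j) := .cons hadj1 (.cons hadj2 .nil)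
      have hle : G.dist (inr i) (inr j) ≤ 2 := by
        have h := SimpleGraph.dist_le w
        simpa [w] using h
      have hpos : 0 < G.dist (inr i) (inr j) :=
        SimpleGraph.Reachable.pos_dist_of_ne ⟨w⟩ (by simp [h])
      have hne1 : G.dist (inr i) (inr j) ≠ 1 := by
        intro he
        have hadj : G.Adj (inr i) (inr j) := SimpleGraph.dist_eq_one_iff_adj.mp he
        exact hadj
      omega
  -- matrix entries
  have hD_ll : ∀ i j : Fin t, distMatrix G (inl i) (inl j) = if i = j then (0:ℝ) else 1 := by
    intro i j; unfold distMatrix; rw [hd_ll i j]; split <;> norm_num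
  have hD_lr : ∀ i j : Fin t, distMatrix G (inl i) (inr j) = 1 := by
    intro i j; unfold distMatrix; rw [hd_lr i j]; norm_num
  have hD_rl : ∀ i j : Fin t, distMatrix G (inr i) (inl j) = 1 := by
    intro i j; unfold distMatrix; rw [hd_rl i j]; norm_num
  have hD_rr : ∀ i j : Fin t, distMatrix G (inr i) (inr j) = if i = j then (0:ℝ) else 2 := by
    intro i j; unfold distMatrix; rw [hd_rr i j]; split <;> norm_num
  -- mulVec formulas
  have hmul_l : ∀ (v : (Fin t ⊕ Fin t) → ℝ) (i : Fin t),
      (distMatrix G).mulVec v (inl i) =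
        (∑ j, v (inl j)) - v (inl i) + ∑ j, v (inr j) := by
    intro v i
    simp only [Matrix.mulVec, dotProduct]
    rw [Fintype.sum_sum_type]
    have h1 : ∑ j, distMatrix G (inl i) (inl j) * v (inl j)
        = ∑ j, (v (inl j) - if i = j then v (inl j) else 0) := by
      refine Finset.sum_congr rfl fun j _ => ?_
      rw [hD_ll i j]
      by_cases h : i = j <;> simp [h]
    have h2 : ∑ j, distMatrix G (inl i) (inr j) * v (inr j) = ∑ j, v (inr j) := by
      refine Finset.sum_congr rfl fun j _ => ?_
      rw [hD_lr i j, one_mul]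
    rw [h1, h2, Finset.sum_sub_distrib, Finset.sum_ite_eq]
    simp
  have hmul_r : ∀ (v : (Fin t ⊕ Fin t) → ℝ) (i : Fin t),
      (distMatrix G).mulVec v (inr i) =
        (∑ j, v (inl j)) + 2 * ((∑ j, v (inr j)) - v (inr i)) := by
    intro v i
    simp only [Matrix.mulVec, dotProduct]
    rw [Fintype.sum_sum_type]
    have h1 : ∑ j, distMatrix G (inr i) (inl j) * v (inl j) = ∑ j, v (inl j) := by
      refine Finset.sum_congr rfl fun j _ => ?_
      rw [hD_rl i j, one_mul]
    have h2 : ∑ j, distMatrix G (inr i) (inr j) * v (inr j)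
        = ∑ j, (2 * v (inr j) - if i = j then 2 * v (inr j) else 0) := by
      refine Finset.sum_congr rfl fun j _ => ?_
      rw [hD_rr i j]
      by_cases h : i = j <;> simp [h]
    rw [h1, h2, Finset.sum_sub_distrib, Finset.sum_ite_eq]
    simp only [Finset.mem_univ, ite_true]
    rw [mul_sub, Finset.mul_sum]
  -- lam is an eigenvalue
  have hmem : Module.End.HasEigenvalue (Matrix.toLin' (distMatrix G)) lam := by
    set v : (Fin t ⊕ Fin t) → ℝ := Sum.elim (fun _ => (t : ℝ)) (fun _ => lam + 1 - t) with hv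
    have hS1 : ∑ j, v (inl j) = (t : ℝ) * t := by
      simp [hv, Finset.sum_const, Finset.card_univ, mul_comm]
    have hS2 : ∑ j, v (inr j) = (t : ℝ) * (lam + 1 - t) := by
      simp [hv, Finset.sum_const, Finset.card_univ, mul_comm]; ring
    have heig : Matrix.toLin' (distMatrix G) v = lam • v := by
      rw [Matrix.toLin'_apply]
      funext u
      rcases u with i | i
      · rw [hmul_l v i, hS1, hS2]
        simp only [hv, Sum.elim_inl, Pi.smul_apply, smul_eq_mul]
        ring
      · rw [hmul_r v i, hS1, hS2]
        simp only [hv, Sum.elim_inr, Pi.smul_apply, smul_eq_mul]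
        linear_combination -hquad
    have hvne : v ≠ 0 := by
      intro h0
      have : v (inl x0) = 0 := by rw [h0]; rfl
      rw [hv] at this
      simp at this
      exact ht0 (by exact_mod_cast this)
    exact Module.End.hasEigenvalue_of_hasEigenvector
      ⟨Module.End.mem_eigenspace_iff.mpr heig, hvne⟩
  -- every eigenvalue is at most lam
  have hub : ∀ μ : ℝ, Module.End.HasEigenvalue (Matrix.toLin' (distMatrix G)) μ → μ ≤ lam := by
    intro μ hμ
    obtain ⟨v, hvmem, hvne⟩ := hμ.exists_hasEigenvector
    have heig : (distMatrix G).mulVec v = μ • v := by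
      rw [← Matrix.toLin'_apply]
      exact Module.End.mem_eigenspace_iff.mp hvmem
    have hl : ∀ i : Fin t, (∑ j, v (inl j)) - v (inl i) + ∑ j, v (inr j) = μ * v (inl i) := by
      intro i
      have := congrFun heig (inl i)
      rw [hmul_l v i] at this
      simpa using this
    have hr : ∀ i : Fin t, (∑ j, v (inl j)) + 2 * ((∑ j, v (inr j)) - v (inr i))
        = μ * v (inr i) := by
      intro i
      have := congrFun heig (inr i)
      rw [hmul_r v i] at this
      simpa using this
    by_cases h1 : μ = -1
    · subst h1; linarith
    by_cases h2 : μ = -2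
    · subst h2; linarith
    have h1' : μ + 1 ≠ 0 := fun h => h1 (by linarith)
    have h2' : μ + 2 ≠ 0 := fun h => h2 (by linarith)
    set x := v (inl x0) with hx
    set y := v (inr x0) with hy
    have hxall : ∀ i : Fin t, v (inl i) = x := by
      intro i
      have e1 := hl i
      have e2 := hl x0
      have : (μ + 1) * v (inl i) = (μ + 1) * x := by rw [hx]; linarith
      exact mul_left_cancel₀ h1' this
    have hyall : ∀ i : Fin t, v (inr i) = y := by
      intro i
      have e1 := hr i
      have e2 := hr x0
      have : (μ + 2) * v (inr i) = (μ + 2) * y := by rw [hy]; linarith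
      exact mul_left_cancel₀ h2' this
    have hS1 : ∑ j, v (inl j) = (t : ℝ) * x := by
      rw [Finset.sum_congr rfl fun j _ => hxall j]
      simp [Finset.sum_const, Finset.card_univ, mul_comm]
    have hS2 : ∑ j, v (inr j) = (t : ℝ) * y := by
      rw [Finset.sum_congr rfl fun j _ => hyall j]
      simp [Finset.sum_const, Finset.card_univ, mul_comm]
    have eq1 : (μ + 1) * x = (t : ℝ) * x + t * y := by
      have := hl x0; rw [hS1, hS2, ← hx] at this; linarith
    have eq2 : (μ + 2) * y = (t : ℝ) * x + 2 * t * y := by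
      have := hr x0; rw [hS1, hS2, ← hy] at this; linarith
    have hx0 : x ≠ 0 := by
      intro hx0
      have hty : (t : ℝ) * y = 0 := by rw [hx0] at eq1; linarith
      have hy0 : y = 0 := by
        rcases mul_eq_zero.mp hty with h | h
        · exact absurd h ht0
        · exact h
      apply hvne
      funext u
      rcases u with i | i
      · rw [hxall i, hx0]; rfl
      · rw [hyall i, hy0]; rfl
    have hkey : (μ ^ 2 - (3 * (t : ℝ) - 3) * μ + ((t : ℝ) ^ 2 - 4 * t + 2)) * x = 0 := by
      linear_combination (μ + 2 - 2 * (t : ℝ)) * eq1 + (t : ℝ) * eq2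
    have hquadμ : μ ^ 2 - (3 * (t : ℝ) - 3) * μ + ((t : ℝ) ^ 2 - 4 * t + 2) = 0 := by
      rcases mul_eq_zero.mp hkey with h | h
      · exact h
      · exact absurd h hx0
    have hsq2 : (2 * μ - (3 * (t : ℝ) - 3)) ^ 2 = 5 * (t : ℝ) ^ 2 - 2 * t + 1 := by
      linear_combination 4 * hquadμ
    have habs : 2 * μ - (3 * (t : ℝ) - 3) ≤ Real.sqrt (5 * (t : ℝ) ^ 2 - 2 * t + 1) := by
      calc 2 * μ - (3 * (t : ℝ) - 3) ≤ |2 * μ - (3 * (t : ℝ) - 3)| := le_abs_self _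
        _ = Real.sqrt ((2 * μ - (3 * (t : ℝ) - 3)) ^ 2) := (Real.sqrt_sq_eq_abs _).symm
        _ = Real.sqrt (5 * (t : ℝ) ^ 2 - 2 * t + 1) := by rw [hsq2]
    rw [hlam]; linarith
  unfold distSpecRad
  exact IsGreatest.csSup_eq ⟨hmem, hub⟩

end AuxStatement15

theorem statement15 (n : ℕ) (hn2 : 2 ≤ n) (hneven : Even n) :
    distSpecRad (starLike n (n / 2)) =
      (Real.sqrt (5 * (n : ℝ) ^ 2 - 4 * n + 4) + 3 * n - 6) / 4 := by
  obtain ⟨k, hk⟩ := hneven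
  have ht : 1 ≤ n / 2 := by omega
  have htt : n - n / 2 = n / 2 := by omega
  have hmain := auxMain (n / 2) (n - n / 2) ht htt
  rw [starLike] at *
  rw [hmain]
  have hT : ((n / 2 : ℕ) : ℝ) = (n : ℝ) / 2 := by
    have : n / 2 = k := by omega
    rw [this, hk]; push_cast; ring
  have hXnn : (0 : ℝ) ≤ 5 * (n : ℝ) ^ 2 - 4 * n + 4 := by
    nlinarith [sq_nonneg ((n : ℝ) - 2), sq_nonneg (n : ℝ)]
  have hs : Real.sqrt (5 * ((n / 2 : ℕ) : ℝ) ^ 2 - 2 * ((n / 2 : ℕ) : ℝ) + 1)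
      = Real.sqrt (5 * (n : ℝ) ^ 2 - 4 * n + 4) / 2 := by
    have harg : 5 * ((n / 2 : ℕ) : ℝ) ^ 2 - 2 * ((n / 2 : ℕ) : ℝ) + 1
        = (5 * (n : ℝ) ^ 2 - 4 * n + 4) / 4 := by rw [hT]; ring
    have h4 : Real.sqrt 4 = 2 := by
      rw [show (4 : ℝ) = 2 ^ 2 by norm_num, Real.sqrt_sq (by norm_num : (0:ℝ) ≤ 2)]
    rw [harg, Real.sqrt_div hXnn, h4]
  rw [hs, hT]
  ring
end
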